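/- Let n ≥ 3 and let A be an acyclic simple digraph on {1,…,n} with at least one edge. Then the maximum of ℓ(A, α) over all α ∈ ⟨A⟩ of rank n − 1 equals the number of edges of a longest directed path in A. Consequently, the maximum of ℓ(A, α) over all acyclic simple digraphs A on {1,…,n} and all α ∈ ⟨A⟩ of rank n − 1 equals n − 1. -/

import Mathlib

noncomputable section

variable {V : Type*}

/-- The arc `(a→b)`: the map sending `a` to `b` and fixing every other point. -/
def arcMap [DecidableEq V] (a b : V) : V → V := fun x => if x = a then b else x

/-- Evaluate a word of arcs, applying the arcs from left to right. -/
def wordEval [DecidableEq V] (w : List (V × V)) : V → V :=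
  fun x => w.foldl (fun y e => arcMap e.1 e.2 y) x

/-- `α ∈ ⟨D⟩`: `α` is a (nonempty) product of arcs of the digraph `D`. -/
def InGen [DecidableEq V] (D : V → V → Prop) (α : V → V) : Prop :=
  ∃ w : List (V × V), w ≠ [] ∧ (∀ e ∈ w, D e.1 e.2) ∧ wordEval w = α

/-- `ℓ(D, α)`: the minimal length of a word in the arcs of `D` expressing `α`. -/
def arcLen [DecidableEq V] (D : V → V → Prop) (α : V → V) : ℕ :=
  sInf {k | ∃ w : List (V × V), w.length = k ∧ (∀ e ∈ w, D e.1 e.2) ∧ wordEval w = α}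

/-- `fix(α)`: the number of fixed points of `α`. -/
def fixCnt (α : V → V) : ℕ := Set.ncard {x | α x = x}

/-- `rk(α)`: the rank of `α`, i.e. the cardinality of its image. -/
def rnk (α : V → V) : ℕ := Set.ncard (Set.range α)

/-- A set `C` is a cyclic orbit of `α` if it is a weakly connected component of the
functional digraph of `α` (edges `(x, α x)`) which is a directed cycle on at least two
vertices: equivalently, `C` is the forward orbit of a periodic point, has at least two
elements, and is closed under taking preimages. -/
def IsCyclicOrbit (α : V → V) (C : Set V) : Prop :=
  2 ≤ C.ncard ∧ (∃ x ∈ C, (∃ k, 0 < k ∧ α^[k] x = x) ∧ C = {y | ∃ k, α^[k] x = y}) ∧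
    ∀ y : V, α y ∈ C → y ∈ C

/-- `cycl(α)`: the number of cyclic orbits of `α`. -/
def cyclCnt (α : V → V) : ℕ := Set.ncard {C : Set V | IsCyclicOrbit α C}

/-- `D` is connected: any two vertices are joined by a directed path in some direction. -/
def ConnectedDigraph (D : V → V → Prop) : Prop :=
  ∀ u v : V, Relation.ReflTransGen D u v ∨ Relation.ReflTransGen D v u

/-- `D` is closed (equal to its closure): whenever `(b,a)` is an edge lying on a directed
cycle of `D` (i.e. there is a directed path from `a` back to `b`), `(a,b)` is also an edge. -/
def ClosedDigraph (D : V → V → Prop) : Prop :=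
  ∀ a b : V, D b a → Relation.ReflTransGen D a b → D a b

/-- Property (★): if `v0, v1, v2` is a directed path with `d_D(v0,v2) = 2`, then every
out-neighbour of `v1` and of `v2` lies in `{v0, v1, v2}`. -/
def StarCond (D : V → V → Prop) : Prop :=
  ∀ v0 v1 v2 : V, D v0 v1 → D v1 v2 → v0 ≠ v2 → ¬ D v0 v2 →
    ∀ u : V, (D v1 u ∨ D v2 u) → (u = v0 ∨ u = v1 ∨ u = v2)

/-- `C` is a strong component of `D`. -/
def IsSC (D : V → V → Prop) (C : Set V) : Prop :=
  ∃ v : V, C = {u | Relation.ReflTransGen D u v ∧ Relation.ReflTransGen D v u}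

/-- `C1` connects to `C2`: some edge goes from `C1` to `C2`. -/
def ConnectsTo (D : V → V → Prop) (C1 C2 : Set V) : Prop :=
  ∃ v1 ∈ C1, ∃ v2 ∈ C2, D v1 v2

/-- `C1` fully connects to `C2`: all pairs are edges. -/
def FullyConnects (D : V → V → Prop) (C1 C2 : Set V) : Prop :=
  ∀ v1 ∈ C1, ∀ v2 ∈ C2, D v1 v2

/-- A terminal strong component: it connects to no other strong component. -/
def IsTerminalSC (D : V → V → Prop) (C : Set V) : Prop :=
  IsSC D C ∧ ∀ C' : Set V, IsSC D C' → C' ≠ C → ¬ ConnectsTo D C C'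

/-- Property (★★): nonterminal strong components have at most 2 vertices and terminal
strong components have at most 3 vertices. -/
def StarStarCond (D : V → V → Prop) : Prop :=
  ∀ C : Set V, IsSC D C →
    (IsTerminalSC D C → C.ncard ≤ 3) ∧ (¬ IsTerminalSC D C → C.ncard ≤ 2)

/-- The induced subdigraph on `C` is an undirected path `a - b - c` on three vertices. -/
def IsP3 (D : V → V → Prop) (C : Set V) : Prop :=
  ∃ a b c : V, a ≠ b ∧ b ≠ c ∧ a ≠ c ∧ C = {a, b, c} ∧
    ∀ u ∈ C, ∀ w ∈ C,
      (D u w ↔ (u = a ∧ w = b) ∨ (u = b ∧ w = a) ∨ (u = b ∧ w = c) ∨ (u = c ∧ w = b))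

/-- `D` has a subdigraph isomorphic to `H`: an injection mapping edges of `H` to edges of `D`. -/
def HasSubdigraph (D : V → V → Prop) {m : ℕ} (H : Fin m → Fin m → Prop) : Prop :=
  ∃ f : Fin m → V, Function.Injective f ∧ ∀ i j : Fin m, H i j → D (f i) (f j)

/-- `Θ_k`: the directed cycle on `k` vertices. -/
def Theta (k : ℕ) : Fin k → Fin k → Prop := fun i j => (j : ℕ) = ((i : ℕ) + 1) % k

/-- `Γ1` (vertices relabelled from `{1,…,5}` to `{0,…,4}`). -/
def Gamma1 : Fin 5 → Fin 5 → Prop := fun i j =>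
  ((i : ℕ), (j : ℕ)) ∈ [(0,3),(3,0),(1,3),(3,1),(2,3),(3,2),(3,4)]

/-- `Γ2` (vertices relabelled from `{1,…,5}` to `{0,…,4}`). -/
def Gamma2 : Fin 5 → Fin 5 → Prop := fun i j =>
  ((i : ℕ), (j : ℕ)) ∈ [(0,2),(2,0),(1,2),(2,1),(2,3),(3,2),(3,4)]

/-- `Γ3` (vertices relabelled from `{1,…,4}` to `{0,…,3}`). -/
def Gamma3 : Fin 4 → Fin 4 → Prop := fun i j =>
  ((i : ℕ), (j : ℕ)) ∈ [(0,1),(1,2),(2,0),(2,3)]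

/-- `Γ4` (vertices relabelled from `{1,…,5}` to `{0,…,4}`). -/
def Gamma4 : Fin 5 → Fin 5 → Prop := fun i j =>
  ((i : ℕ), (j : ℕ)) ∈ [(0,1),(1,2),(2,3),(3,0),(3,4)]

/-- No subdigraph isomorphic to `Γ1`, `Γ2`, `Γ3`, `Γ4` or `Θ_k` for `k ≥ 5`. -/
def ForbiddenFree (D : V → V → Prop) : Prop :=
  ¬ HasSubdigraph D Gamma1 ∧ ¬ HasSubdigraph D Gamma2 ∧ ¬ HasSubdigraph D Gamma3 ∧
    ¬ HasSubdigraph D Gamma4 ∧ ∀ k : ℕ, 5 ≤ k → ¬ HasSubdigraph D (Theta k)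

/-- `D` is acyclic: it has no directed cycle. -/
def AcyclicRel (D : V → V → Prop) : Prop := ∀ v : V, ¬ Relation.TransGen D v v

/-- `ψ_A(u,w)`: the maximal number of edges of a directed path from `u` to `w` in `A`
(in particular `ψ_A(u,u) = 0`). -/
def psiLongest (A : V → V → Prop) (u w : V) : ℕ :=
  sSup {l | ∃ p : List V, p.Chain' A ∧ p.Nodup ∧
    p.head? = some u ∧ p.getLast? = some w ∧ p.length = l + 1}

/-- `d_D(u,w)`: the minimal number of edges of a directed path from `u` to `w` in `D`. -/
def ddist (D : V → V → Prop) (u w : V) : ℕ :=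
  sInf {l | ∃ p : List V, p.Chain' D ∧ p.head? = some u ∧ p.getLast? = some w ∧
    p.length = l + 1}

/-- A tournament: no loops, and exactly one of `(u,v)`, `(v,u)` is an edge for `u ≠ v`. -/
def IsTournament (D : V → V → Prop) : Prop :=
  (∀ v : V, ¬ D v v) ∧ ∀ u v : V, u ≠ v → (D u v ∨ D v u) ∧ ¬ (D u v ∧ D v u)

/-- A strong (strongly connected) digraph. -/
def IsStrongDigraph (D : V → V → Prop) : Prop :=
  ∀ u v : V, Relation.ReflTransGen D u v

/-!
The rank `n - 1` elements of `⟨A⟩` for acyclic `A` are exactly the shifts along directed paths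
`v₀ → v₁ → ⋯ → vₖ` with `k ≥ 1`, i.e. the maps `vᵢ ↦ vᵢ₊₁` (`i < k`) fixing every other point.
Such a shift is the product `(vₖ₋₁→vₖ) ⋯ (v₀→v₁)` of `k` arcs, and no shorter word can express it,
since a word moves at most as many points as it has letters and the shift moves `k` points.
That every rank `n - 1` product of arcs is a path shift follows by induction on the word:
composing a path shift with a further arc `(a→b)` either keeps it (`a = v₀`), extends the path
at its start (`b = v₀`; acyclicity keeps the path simple), or misses both `a` and `v₀` in its
image and so drops the rank to at most `n - 2`.
-/

lemma AcyclicRel.ne {A : V → V → Prop} (hA : AcyclicRel A) {a b : V} (hab : A a b) : a ≠ b := by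
  rintro rfl
  exact hA a (.single hab)

lemma AcyclicRel.not_mem_of_isChain {A : V → V → Prop} (hA : AcyclicRel A) {a b : V}
    {q : List V} (hab : A a b) (hq : (b :: q).IsChain A) : a ∉ b :: q := fun ha =>
  hA a <| hq.induction (Relation.TransGen A a) _ (fun _ _ hxy hx => hx.tail hxy)
    (fun _ => .single hab) a ha

lemma acyclicRel_lt [Preorder V] : AcyclicRel (V := V) (· < ·) := fun v hv => by
  rw [Relation.transGen_eq_self] at hv
  exact lt_irrefl v hv

lemma rnk_comp_le [Finite V] (f g : V → V) : rnk (f ∘ g) ≤ rnk g := by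
  rw [rnk, rnk, Set.range_comp]
  exact Set.ncard_image_le (Set.toFinite _)

lemma rnk_add_two_le [Finite V] {f : V → V} {a b : V} (hab : a ≠ b)
    (hf : ∀ x, f x ≠ a ∧ f x ≠ b) : rnk f + 2 ≤ Nat.card V := by
  have hsub : Set.range f ⊆ {a, b}ᶜ := by
    rintro _ ⟨x, rfl⟩
    simpa [not_or] using hf x
  calc rnk f + 2 ≤ ({a, b}ᶜ : Set V).ncard + ({a, b} : Set V).ncard := by
        rw [Set.ncard_pair hab]
        exact Nat.add_le_add_right (Set.ncard_le_ncard hsub) 2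
    _ = Nat.card V := Set.ncard_compl_add_ncard _

def pathWord : List V → List (V × V)
  | a :: b :: p => pathWord (b :: p) ++ [(a, b)]
  | _ => []

lemma length_pathWord : ∀ p : List V, (pathWord p).length = p.length - 1
  | [] | [_] => rfl
  | a :: b :: p => by
    simp [pathWord, length_pathWord (b :: p)]

lemma rel_of_mem_pathWord {D : V → V → Prop} :
    ∀ {p : List V}, p.IsChain D → ∀ e ∈ pathWord p, D e.1 e.2
  | [], _, _, he | [_], _, _, he => by simp [pathWord] at he
  | a :: b :: p, hp, e, he => by
    rw [List.isChain_cons_cons] at hp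
    simp only [pathWord, List.mem_append, List.mem_singleton] at he
    rcases he with he | rfl
    exacts [rel_of_mem_pathWord hp.2 e he, hp.1]

section PathShift

variable [DecidableEq V]

lemma arcMap_of_ne {a b x : V} (hx : x ≠ a) : arcMap a b x = x := if_neg hx

lemma arcMap_ne_left {a b : V} (hab : a ≠ b) (x : V) : arcMap a b x ≠ a := by
  unfold arcMap
  split_ifs with hx
  exacts [hab.symm, hx]

/-- For a nodup list `[v₀, …, vₖ]` this maps `vᵢ ↦ vᵢ₊₁` for `i < k` and fixes every other
point. -/
def pathShift : List V → V → V
  | a :: b :: p => fun x => if x = a then b else pathShift (b :: p) x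
  | _ => id

lemma pathShift_cons_cons (a b : V) (p : List V) (x : V) :
    pathShift (a :: b :: p) x = if x = a then b else pathShift (b :: p) x := rfl

lemma pathShift_of_not_mem : ∀ {p : List V} {x : V}, x ∉ p → pathShift p x = x
  | [], _, _ | [_], _, _ => rfl
  | a :: b :: p, x, h => by
    rw [List.mem_cons, not_or] at h
    rw [pathShift_cons_cons, if_neg h.1, pathShift_of_not_mem h.2]

lemma pathShift_mem : ∀ {p : List V} {x : V}, x ∈ p → pathShift p x ∈ p
  | [], _, h | [_], _, h => h
  | a :: b :: p, x, h => by
    rw [pathShift_cons_cons]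
    split_ifs with hx
    · simp
    · exact List.mem_cons_of_mem _ (pathShift_mem ((List.mem_cons.1 h).resolve_left hx))

lemma pathShift_eq_iff_of_not_mem {p : List V} {x y : V} (hy : y ∉ p) :
    pathShift p x = y ↔ x = y := by
  by_cases hx : x ∈ p
  · exact iff_of_false (fun h => hy (h ▸ pathShift_mem hx)) (fun h => hy (h ▸ hx))
  · rw [pathShift_of_not_mem hx]

lemma pathShift_ne_head {a b : V} {q : List V} (hnd : (a :: b :: q).Nodup) (x : V) :
    pathShift (a :: b :: q) x ≠ a := by
  have ha := (List.nodup_cons.1 hnd).1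
  rw [pathShift_cons_cons]
  split_ifs with hx
  · exact fun h => ha (h ▸ List.mem_cons_self)
  · exact mt (pathShift_eq_iff_of_not_mem ha).1 hx

lemma exists_pathShift_eq : ∀ {a b : V} {q : List V}, (a :: b :: q).Nodup →
    ∀ {x : V}, x ≠ a → ∃ y, pathShift (a :: b :: q) y = x
  | a, b, q, hnd, x, hxa => by
    by_cases hxb : x = b
    · exact ⟨a, by rw [pathShift_cons_cons, if_pos rfl, hxb]⟩
    have hx : ∃ y, y ≠ a ∧ pathShift (b :: q) y = x := by
      match q, hnd with
      | [], _ => exact ⟨x, hxa, rfl⟩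
      | c :: r, hnd =>
        obtain ⟨y, hy⟩ := exists_pathShift_eq (List.nodup_cons.1 hnd).2 hxb
        refine ⟨y, ?_, hy⟩
        rintro rfl
        exact hxa (hy.symm.trans (pathShift_of_not_mem (List.nodup_cons.1 hnd).1))
    obtain ⟨y, hya, hy⟩ := hx
    exact ⟨y, by rw [pathShift_cons_cons, if_neg hya, hy]⟩

lemma range_pathShift {a b : V} {q : List V} (hnd : (a :: b :: q).Nodup) :
    Set.range (pathShift (a :: b :: q)) = {a}ᶜ := by
  ext x
  simp only [Set.mem_range, Set.mem_compl_iff, Set.mem_singleton_iff]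
  exact ⟨by rintro ⟨y, rfl⟩; exact pathShift_ne_head hnd y, exists_pathShift_eq hnd⟩

lemma arcMap_comp_pathShift {a b : V} {q : List V} (ha : a ∉ b :: q) :
    arcMap a b ∘ pathShift (b :: q) = pathShift (a :: b :: q) := by
  funext x
  rw [Function.comp_apply, pathShift_cons_cons]
  split_ifs with hx
  · rw [hx, pathShift_of_not_mem ha]
    exact if_pos rfl
  · exact arcMap_of_ne (mt (pathShift_eq_iff_of_not_mem ha).1 hx)

lemma pathShift_ne_self : ∀ {p : List V}, p.Nodup → ∀ {x : V}, x ∈ p.dropLast →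
    pathShift p x ≠ x
  | [], _, _, hx | [_], _, _, hx => by simp at hx
  | a :: b :: q, hnd, x, hx => by
    have ha := (List.nodup_cons.1 hnd).1
    rw [List.dropLast_cons_cons, List.mem_cons] at hx
    rw [pathShift_cons_cons]
    rcases hx with rfl | hx
    · rw [if_pos rfl]
      exact fun h => ha (h ▸ List.mem_cons_self)
    · have hxq : x ∈ b :: q := List.dropLast_subset _ hx
      have hxa : x ≠ a := fun h => ha (h ▸ hxq)
      rw [if_neg hxa]
      exact pathShift_ne_self (List.nodup_cons.1 hnd).2 hx

lemma rnk_pathShift [Finite V] {p : List V} (hnd : p.Nodup) (hlen : 2 ≤ p.length) :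
    rnk (pathShift p) = Nat.card V - 1 := by
  match p, hnd, hlen with
  | a :: b :: q, hnd, _ =>
    rw [rnk, range_pathShift hnd, Set.ncard_compl, Set.ncard_singleton]

lemma wordEval_append (w₁ w₂ : List (V × V)) :
    wordEval (w₁ ++ w₂) = wordEval w₂ ∘ wordEval w₁ := by
  funext x
  simp [wordEval, List.foldl_append]

lemma wordEval_concat (w : List (V × V)) (e : V × V) :
    wordEval (w ++ [e]) = arcMap e.1 e.2 ∘ wordEval w := by
  rw [wordEval_append]
  rfl

lemma wordEval_pathWord : ∀ {p : List V}, p.Nodup → wordEval (pathWord p) = pathShift p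
  | [], _ | [_], _ => rfl
  | a :: b :: q, hnd => by
    rw [pathWord, wordEval_concat, wordEval_pathWord (List.nodup_cons.1 hnd).2]
    exact arcMap_comp_pathShift (List.nodup_cons.1 hnd).1

lemma inGen_pathShift {D : V → V → Prop} {p : List V} (hp : p.IsChain D) (hnd : p.Nodup)
    (hlen : 2 ≤ p.length) : InGen D (pathShift p) := by
  refine ⟨pathWord p, ?_, rel_of_mem_pathWord hp, wordEval_pathWord hnd⟩
  rw [← List.length_pos_iff, length_pathWord]
  omega

lemma ncard_setOf_wordEval_ne_le [Finite V] :
    ∀ w : List (V × V), {x | wordEval w x ≠ x}.ncard ≤ w.length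
  | [] => by simp [wordEval]
  | e :: w => by
    have hsub : {x | wordEval (e :: w) x ≠ x} ⊆ insert e.1 {x | wordEval w x ≠ x} := by
      intro x hx
      by_cases hxe : x = e.1
      · exact .inl hxe
      · exact .inr (by simpa [wordEval, arcMap_of_ne hxe] using hx)
    calc {x | wordEval (e :: w) x ≠ x}.ncard
        ≤ (insert e.1 {x | wordEval w x ≠ x}).ncard := Set.ncard_le_ncard hsub
      _ ≤ {x | wordEval w x ≠ x}.ncard + 1 := Set.ncard_insert_le _ _
      _ ≤ (e :: w).length := by
        simpa using ncard_setOf_wordEval_ne_le w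

lemma ncard_setOf_ne_le_arcLen [Finite V] {D : V → V → Prop} {α : V → V}
    {w : List (V × V)} (hw : ∀ e ∈ w, D e.1 e.2) (hα : wordEval w = α) :
    {x | α x ≠ x}.ncard ≤ arcLen D α := by
  obtain ⟨w', hlen, -, rfl⟩ := Nat.sInf_mem (⟨w.length, w, rfl, hw, hα⟩ :
    {k | ∃ w : List (V × V), w.length = k ∧ (∀ e ∈ w, D e.1 e.2) ∧ wordEval w = α}.Nonempty)
  rw [arcLen, ← hlen]
  exact ncard_setOf_wordEval_ne_le w'

lemma arcLen_pathShift [Finite V] {D : V → V → Prop} {p : List V} (hp : p.IsChain D)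
    (hnd : p.Nodup) : arcLen D (pathShift p) = p.length - 1 := by
  have hw := rel_of_mem_pathWord hp
  refine le_antisymm ?_ ?_
  · exact Nat.sInf_le ⟨pathWord p, length_pathWord p, hw, wordEval_pathWord hnd⟩
  · calc p.length - 1 = (p.dropLast.toFinset : Set V).ncard := by
          rw [Set.ncard_coe_finset, List.toFinset_card_of_nodup (hnd.sublist p.dropLast_sublist),
            List.length_dropLast]
      _ ≤ {x | pathShift p x ≠ x}.ncard :=
          Set.ncard_le_ncard fun x hx => pathShift_ne_self hnd (by simpa using hx)
      _ ≤ arcLen D (pathShift p) := ncard_setOf_ne_le_arcLen hw (wordEval_pathWord hnd)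

lemma arcMap_comp_pathShift_cases [Finite V] {A : V → V → Prop} (hA : AcyclicRel A)
    {p : List V} (hp : p.IsChain A) (hnd : p.Nodup) {a b : V} (hab : A a b) :
    (∃ p' : List V, p'.IsChain A ∧ p'.Nodup ∧ arcMap a b ∘ pathShift p = pathShift p') ∨
      rnk (arcMap a b ∘ pathShift p) + 2 ≤ Nat.card V := by
  have hne := hA.ne hab
  match p, hp, hnd with
  | [], _, _ | [_], _, _ => exact .inl ⟨[a, b], by simpa using hab, by simpa using hne, rfl⟩
  | v :: w :: q, hp, hnd =>
    by_cases hav : a = v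
    · subst hav
      exact .inl ⟨_, hp, hnd, funext fun x => arcMap_of_ne (pathShift_ne_head hnd x)⟩
    by_cases hbv : b = v
    · subst hbv
      have ha := hA.not_mem_of_isChain hab hp
      exact .inl ⟨_, hp.cons_cons hab, List.nodup_cons.2 ⟨ha, hnd⟩, arcMap_comp_pathShift ha⟩
    · refine .inr (rnk_add_two_le hav fun x => ⟨arcMap_ne_left hne _, ?_⟩)
      have hx := pathShift_ne_head hnd x
      simp only [Function.comp_apply, arcMap]
      split_ifs
      exacts [hbv, hx]

theorem wordEval_eq_pathShift_or_rnk_add_two_le [Finite V] {A : V → V → Prop}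
    (hA : AcyclicRel A) {w : List (V × V)} (hw : ∀ e ∈ w, A e.1 e.2) :
    (∃ p : List V, p.IsChain A ∧ p.Nodup ∧ wordEval w = pathShift p) ∨
      rnk (wordEval w) + 2 ≤ Nat.card V := by
  induction w using List.reverseRecOn with
  | nil => exact .inl ⟨[], .nil, List.nodup_nil, rfl⟩
  | append_singleton w e ih =>
    rw [wordEval_concat]
    rcases ih fun e' he' => hw e' (List.mem_append_left _ he') with ⟨p, hp, hnd, hwp⟩ | hrk
    · rw [hwp]
      exact arcMap_comp_pathShift_cases hA hp hnd (hw e (by simp))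
    · exact .inr ((Nat.add_le_add_right (rnk_comp_le _ _) 2).trans hrk)

theorem exists_pathShift_eq_of_rnk_eq [Finite V] {A : V → V → Prop} (hA : AcyclicRel A)
    {α : V → V} (hα : InGen A α) (hrk : rnk α = Nat.card V - 1) :
    ∃ p : List V, p.IsChain A ∧ p.Nodup ∧ α = pathShift p := by
  obtain ⟨w, -, hw, rfl⟩ := hα
  rcases wordEval_eq_pathShift_or_rnk_add_two_le hA hw with ⟨p, hp, hnd, hwp⟩ | hrk'
  · exact ⟨p, hp, hnd, hwp⟩
  · omega

end PathShift

theorem isGreatest_arcLen_of_acyclicRel [Finite V] [DecidableEq V] {A : V → V → Prop}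
    (hA : AcyclicRel A) (hedge : ∃ a b : V, A a b) {L : ℕ}
    (hL : IsGreatest {l | ∃ p : List V, p.IsChain A ∧ p.Nodup ∧ p.length = l + 1} L) :
    IsGreatest {k | ∃ α : V → V, InGen A α ∧ rnk α = Nat.card V - 1 ∧ arcLen A α = k} L := by
  obtain ⟨a, b, hab⟩ := hedge
  have hL1 : 1 ≤ L := hL.2 ⟨[a, b], by simpa using hab, by simpa using hA.ne hab, rfl⟩
  obtain ⟨p, hp, hnd, hlen⟩ := hL.1
  refine ⟨⟨pathShift p, inGen_pathShift hp hnd (by omega), rnk_pathShift hnd (by omega),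
    by rw [arcLen_pathShift hp hnd, hlen, Nat.add_sub_cancel]⟩, ?_⟩
  rintro k ⟨α, hα, hrk, rfl⟩
  obtain ⟨q, hq, hqnd, rfl⟩ := exists_pathShift_eq_of_rnk_eq hA hα hrk
  rw [arcLen_pathShift hq hqnd]
  rcases Nat.eq_zero_or_pos q.length with hq0 | hq0
  · omega
  · exact hL.2 ⟨q, hq, hqnd, by omega⟩

theorem stmt13_general (n : ℕ) (A : Fin n → Fin n → Prop) (hA : AcyclicRel A)
    (hedge : ∃ a b : Fin n, A a b) (L : ℕ)
    (hL : IsGreatest {l | ∃ p : List (Fin n), p.Chain' A ∧ p.Nodup ∧ p.length = l + 1} L) :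
    IsGreatest {k | ∃ α : Fin n → Fin n, InGen A α ∧ rnk α = n - 1 ∧ arcLen A α = k} L ∧
    IsGreatest {k | ∃ A' : Fin n → Fin n → Prop, AcyclicRel A' ∧
        ∃ α : Fin n → Fin n, InGen A' α ∧ rnk α = n - 1 ∧ arcLen A' α = k} (n - 1) := by
  have hmax := isGreatest_arcLen_of_acyclicRel hA hedge hL
  rw [Nat.card_fin] at hmax
  refine ⟨hmax, ?_, ?_⟩
  · obtain ⟨a, b, hab⟩ := hedge
    have hn : 1 < n := by simpa using Fintype.one_lt_card_iff.2 ⟨a, b, hA.ne hab⟩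
    have hp : (List.finRange n).IsChain (· < ·) :=
      List.sortedLT_iff_isChain.1 (List.sortedLT_finRange n)
    have hnd := List.nodup_finRange n
    refine ⟨(· < ·), acyclicRel_lt, pathShift (List.finRange n), inGen_pathShift hp hnd (by simpa),
      by rw [rnk_pathShift hnd (by simpa), Nat.card_fin], by simp [arcLen_pathShift hp hnd]⟩
  · rintro k ⟨A', hA', α, hα, hrk, rfl⟩
    obtain ⟨p, hp, hnd, rfl⟩ := exists_pathShift_eq_of_rnk_eq hA' hα (by rwa [Nat.card_fin])
    have hlen : p.length ≤ n := by simpa using hnd.length_le_card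
    rw [arcLen_pathShift hp hnd]
    omega

/-- for `n ≥ 3` and an acyclic simple digraph `A` on `{1,…,n}` with at least
one edge, the maximum of `ℓ(A, α)` over `α ∈ ⟨A⟩` of rank `n−1` equals the number of edges
`L` of a longest directed path in `A`; consequently the maximum over all acyclic `A` of
this quantity is `n − 1`. -/
theorem stmt13 (n : ℕ) (hn : 3 ≤ n) (A : Fin n → Fin n → Prop) (hA : AcyclicRel A)
    (hedge : ∃ a b : Fin n, A a b) (L : ℕ)
    (hL : IsGreatest {l | ∃ p : List (Fin n), p.Chain' A ∧ p.Nodup ∧ p.length = l + 1} L) :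
    IsGreatest {k | ∃ α : Fin n → Fin n, InGen A α ∧ rnk α = n - 1 ∧ arcLen A α = k} L ∧
    IsGreatest {k | ∃ A' : Fin n → Fin n → Prop, AcyclicRel A' ∧
        ∃ α : Fin n → Fin n, InGen A' α ∧ rnk α = n - 1 ∧ arcLen A' α = k} (n - 1) :=
  stmt13_general n A hA hedge L hL
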